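/- Let n ≥ 2 and let α₁,…,α_g, β₁,…,β_g ∈ F_n satisfy ∏_{i=1}^g [α_i, y_i]·[x_i, β_i] ∈ F_{n+2}. Then the endomorphism h of F determined by h(x_i) = x_i·α_i and h(y_i) = y_i·β_i induces an automorphism of F/F_{n+1} which belongs to A₀(F/F_{n+1}) (i.e., h(ω_g) ≡ ω_g modulo F_{n+2}) and which induces the identity automorphism of F/F_n. -/

import Mathlib

open scoped commutatorElement

/-!
`Fg g` is the free group `F` on `2g` generators `x₁,…,x_g,y₁,…,y_g`
(`X g i = x_i`, `Y g i = y_i`), `omegaG g = [x₁,y₁]⋯[x_g,y_g]`.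
Paper convention: `F_k = (⊤ : Subgroup (Fg g)).lowerCentralSeries (k-1)`, and
`Q g k = F/F_k`.  `IsA0 g k φ` says that the automorphism `φ` of `F/F_k`
lies in `A₀(F/F_k)`: some endomorphism of `F` lifting `φ` sends `ω_g`
into `ω_g·F_{k+1}`.
-/

abbrev Fg (g : ℕ) := FreeGroup (Fin g × Bool)

def X (g : ℕ) (i : Fin g) : Fg g := FreeGroup.of (i, false)

def Y (g : ℕ) (i : Fin g) : Fg g := FreeGroup.of (i, true)

def omegaG (g : ℕ) : Fg g := ((List.finRange g).map fun i => ⁅X g i, Y g i⁆).prod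

/-- `F/F_k` in the paper's indexing of the lower central series. -/
abbrev Q (g k : ℕ) := Fg g ⧸ (⊤ : Subgroup (Fg g)).lowerCentralSeries (k - 1)

def mkQ (g k : ℕ) : Fg g →* Q g k := QuotientGroup.mk' _

/-- Membership in `A₀(F/F_k)`. -/
def IsA0 (g k : ℕ) (φ : MulAut (Q g k)) : Prop :=
  ∃ h : Fg g →* Fg g,
    (∀ a : Fg g, mkQ g k (h a) = φ (mkQ g k a)) ∧
    (omegaG g)⁻¹ * h (omegaG g) ∈ (⊤ : Subgroup (Fg g)).lowerCentralSeries k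

/-- The natural projection `F/F_{k+1} → F/F_k`. -/
def projQ (g k : ℕ) : Q g (k + 1) →* Q g k :=
  QuotientGroup.map _ _ (MonoidHom.id _)
    (fun x hx => (⊤ : Subgroup (Fg g)).lowerCentralSeries_antitone (Nat.sub_le k 1) hx)

/-!
Since `h` is the identity modulo `F_n`, an induction along the lower central series shows that it
moves every element of `F_k` only by an element of `F_{k+n-1}`; this uses
`[F_i, F_j] ⊆ F_{i+j}`, which follows from the three subgroups lemma. As `n ≥ 2`, the induced
endomorphism of the nilpotent group `F/F_{n+1}` is then injective, and surjective by successive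
approximation.

Modulo `F_{n+2}` the commutators `[α_i, y_i]` and `[x_i, β_i]` are central and `[α_i, β_i]`
vanishes, so `[x_i α_i, y_i β_i] ≡ [x_i, y_i] [α_i, y_i] [x_i, β_i]`, whence
`h(ω_g) ≡ ω_g ∏_i [α_i, y_i] [x_i, β_i] ≡ ω_g`.
-/

section LowerCentralSeries

variable {G : Type*} [Group G]

open Subgroup QuotientGroup

-- `γ k` is `F_{k+1}` in the paper's indexing.
local notation "γ" => Subgroup.lowerCentralSeries (⊤ : Subgroup G)

theorem Subgroup.commutator_commutator_le_of_rotate {H₁ H₂ H₃ N : Subgroup G} [N.Normal]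
    (h₁ : ⁅⁅H₂, H₃⁆, H₁⁆ ≤ N) (h₂ : ⁅⁅H₃, H₁⁆, H₂⁆ ≤ N) : ⁅⁅H₁, H₂⁆, H₃⁆ ≤ N := by
  simp only [← ker_mk' N, ← map_eq_bot_iff, map_commutator] at h₁ h₂ ⊢
  exact commutator_commutator_eq_bot_of_rotate h₁ h₂

theorem Subgroup.commutator_lowerCentralSeries_le (i j : ℕ) : ⁅γ i, γ j⁆ ≤ γ (i + j + 1) := by
  induction j generalizing i with
  | zero => rfl
  | succ j ih =>
    rw [lowerCentralSeries_succ, commutator_comm]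
    apply commutator_commutator_le_of_rotate
    · rw [commutator_comm ⊤, ← lowerCentralSeries_succ]
      exact (ih (i + 1)).trans_eq (by congr 1; omega)
    · exact commutator_mono (ih i) le_rfl

theorem Subgroup.commutatorElement_mem_lowerCentralSeries {i j : ℕ} {a b : G}
    (ha : a ∈ γ i) (hb : b ∈ γ j) : ⁅a, b⁆ ∈ γ (i + j + 1) :=
  commutator_lowerCentralSeries_le i j (commutator_mem_commutator ha hb)

theorem commutatorElement_mul_mul_of_mem_center {x y a b : G} (hay : ⁅a, y⁆ ∈ center G)
    (hxb : ⁅x, b⁆ ∈ center G) (hab : Commute a b) :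
    ⁅x * a, y * b⁆ = ⁅x, y⁆ * (⁅a, y⁆ * ⁅x, b⁆) := by
  have conj_eq {z : G} (hz : z ∈ center G) (w : G) : w * z * w⁻¹ = z := by
    rw [mem_center_iff.mp hz w, mul_inv_cancel_right]
  calc ⁅x * a, y * b⁆
      = x * (⁅a, y⁆ * (y * ⁅a, b⁆ * y⁻¹)) * x⁻¹ * (⁅x, y⁆ * (y * ⁅x, b⁆ * y⁻¹)) := by
        simp only [commutatorElement_def]; group
    _ = ⁅a, y⁆ * (⁅x, y⁆ * ⁅x, b⁆) := by
        rw [hab.commutator_eq, mul_one, mul_inv_cancel, mul_one, conj_eq hay, conj_eq hxb]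
    _ = ⁅x, y⁆ * (⁅a, y⁆ * ⁅x, b⁆) := by
        rw [← mul_assoc, ← mul_assoc, mem_center_iff.mp hay]

theorem List.prod_map_mul_of_mem_center {ι : Type*} {f c : ι → G} (hc : ∀ i, c i ∈ center G)
    (l : List ι) : (l.map fun i => f i * c i).prod = (l.map f).prod * (l.map c).prod := by
  induction l with
  | nil => simp
  | cons i l ih =>
    simp only [List.map_cons, List.prod_cons, ih, mul_assoc]
    rw [← mul_assoc (c i), ← mem_center_iff.mp (hc i), mul_assoc]

theorem QuotientGroup.commute_mk_of_commutatorElement_mem {N : Subgroup G} [N.Normal] {a b : G}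
    (h : ⁅a, b⁆ ∈ N) : Commute (a : G ⧸ N) b := by
  rwa [← commutatorElement_eq_one_iff_commute, ← mk'_apply, ← mk'_apply, ← map_commutatorElement,
    mk'_apply, eq_one_iff]

theorem QuotientGroup.mk_mem_center_of_mem_lowerCentralSeries {k : ℕ} {z : G} (hz : z ∈ γ k) :
    (z : G ⧸ γ (k + 1)) ∈ center _ := by
  refine mem_center_iff.mpr fun q => ?_
  induction q using QuotientGroup.induction_on with
  | H b =>
    exact (commute_mk_of_commutatorElement_mem (commutator_mem_commutator hz (mem_top b))).symm

theorem QuotientGroup.mk_commutatorElement_mul_mul {K : ℕ} {x y a b : G} (hay : ⁅a, y⁆ ∈ γ K)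
    (hxb : ⁅x, b⁆ ∈ γ K) (hab : ⁅a, b⁆ ∈ γ (K + 1)) :
    ((⁅x * a, y * b⁆ : G) : G ⧸ γ (K + 1)) = ⁅x, y⁆ * (⁅a, y⁆ * ⁅x, b⁆ : G) := by
  simp only [← mk'_apply, map_mul, map_commutatorElement]
  refine commutatorElement_mul_mul_of_mem_center ?_ ?_ (commute_mk_of_commutatorElement_mem hab)
  · rw [← map_commutatorElement]; exact mk_mem_center_of_mem_lowerCentralSeries hay
  · rw [← map_commutatorElement]; exact mk_mem_center_of_mem_lowerCentralSeries hxb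

theorem QuotientGroup.mk_list_prod_commutatorElement_mul_mul {ι : Type*} {K : ℕ}
    {x y a b : ι → G} (hay : ∀ i, ⁅a i, y i⁆ ∈ γ K) (hxb : ∀ i, ⁅x i, b i⁆ ∈ γ K)
    (hab : ∀ i, ⁅a i, b i⁆ ∈ γ (K + 1)) (l : List ι) :
    mk' (γ (K + 1)) (l.map fun i => ⁅x i * a i, y i * b i⁆).prod =
      mk' _ (l.map fun i => ⁅x i, y i⁆).prod *
        mk' _ (l.map fun i => ⁅a i, y i⁆ * ⁅x i, b i⁆).prod := by
  have factor (i : ι) : mk' (γ (K + 1)) ⁅x i * a i, y i * b i⁆ =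
      mk' _ ⁅x i, y i⁆ * mk' _ (⁅a i, y i⁆ * ⁅x i, b i⁆) := by
    simpa only [mk'_apply, ← mk_mul] using mk_commutatorElement_mul_mul (hay i) (hxb i) (hab i)
  simp only [map_list_prod, List.map_map, Function.comp_def, factor]
  exact List.prod_map_mul_of_mem_center
    (fun i => mk_mem_center_of_mem_lowerCentralSeries (mul_mem (hay i) (hxb i))) l

theorem inv_mul_map_mem_lowerCentralSeries_add (φ : G →* G) {m : ℕ}
    (hφ : ∀ a, a⁻¹ * φ a ∈ γ m) (k : ℕ) {e : G} (he : e ∈ γ k) : e⁻¹ * φ e ∈ γ (k + m) := by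
  induction k generalizing e with
  | zero => simpa using hφ e
  | succ k ih =>
    let N := γ (k + m + 1)
    suffices γ (k + 1) ≤ (mk' N).eqLocus ((mk' N).comp φ) by
      rw [Nat.add_right_comm]; exact QuotientGroup.eq.mp (this he)
    refine commutator_le.mpr fun p hp q _ => ?_
    obtain ⟨u, hu, hpu⟩ : ∃ u ∈ γ (k + m), φ p = p * u := ⟨_, ih hp, (mul_inv_cancel_left p _).symm⟩
    obtain ⟨v, hv, hqv⟩ : ∃ v ∈ γ m, φ q = q * v := ⟨_, hφ q, (mul_inv_cancel_left q _).symm⟩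
    have huq : ⁅u, q⁆ ∈ N := commutator_mem_commutator hu (mem_top q)
    have hpv : ⁅p, v⁆ ∈ N := commutatorElement_mem_lowerCentralSeries hp hv
    have huv : ⁅u, v⁆ ∈ N := Subgroup.lowerCentralSeries_antitone _ (by omega)
      (commutatorElement_mem_lowerCentralSeries hu hv)
    change ((⁅p, q⁆ : G) : G ⧸ N) = ((φ ⁅p, q⁆ : G) : G ⧸ N)
    rw [map_commutatorElement, hpu, hqv,
      mk_commutatorElement_mul_mul (K := k + m)
        (Subgroup.lowerCentralSeries_antitone _ (k + m).le_succ huq)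
        (Subgroup.lowerCentralSeries_antitone _ (k + m).le_succ hpv) huv,
      (eq_one_iff _).mpr (mul_mem huq hpv), mul_one]

theorem bijective_of_inv_mul_map_mem_lowerCentralSeries_one (φ : G →* G) {N : ℕ}
    (hN : γ N = ⊥) (hφ : ∀ a, a⁻¹ * φ a ∈ γ 1) : Function.Bijective φ := by
  have raise := inv_mul_map_mem_lowerCentralSeries_add φ hφ
  refine ⟨(injective_iff_map_eq_one φ).mpr fun e he => ?_, fun a => ?_⟩
  · have mem (k : ℕ) : e ∈ γ k := by
      induction k with
      | zero => exact mem_top e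
      | succ k ih => simpa [he] using raise k ih
    simpa [hN] using mem N
  · have approx (k : ℕ) : ∃ b, (φ b)⁻¹ * a ∈ γ k := by
      induction k with
      | zero => exact ⟨1, mem_top _⟩
      | succ k ih =>
        obtain ⟨b, hb⟩ := ih
        exact ⟨b * ((φ b)⁻¹ * a), by simpa [mul_assoc] using inv_mem (raise k hb)⟩
    obtain ⟨b, hb⟩ := approx N
    exact ⟨b, inv_mul_eq_one.mp (by simpa [hN] using hb)⟩

theorem QuotientGroup.lowerCentralSeries_eq_map_mk' (K : Subgroup G) [K.Normal] (k : ℕ) :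
    (⊤ : Subgroup (G ⧸ K)).lowerCentralSeries k = (γ k).map (mk' K) := by
  rw [map_lowerCentralSeries, map_top_of_surjective _ (mk'_surjective K)]

theorem Subgroup.lowerCentralSeries_le_comap (φ : G →* G) (k : ℕ) : γ k ≤ (γ k).comap φ := by
  rw [← map_le_iff_le_comap, map_lowerCentralSeries]
  exact lowerCentralSeries_mono k le_top

theorem QuotientGroup.bijective_map_lowerCentralSeries (φ : G →* G) (hφ : ∀ a, a⁻¹ * φ a ∈ γ 1)
    (k : ℕ) : Function.Bijective (map _ _ φ (lowerCentralSeries_le_comap φ k)) := by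
  refine bijective_of_inv_mul_map_mem_lowerCentralSeries_one _ (N := k) ?_ fun q => ?_
  · rw [lowerCentralSeries_eq_map_mk', Subgroup.map_eq_bot_iff, ker_mk']
  · induction q using QuotientGroup.induction_on with
    | H a =>
      rw [lowerCentralSeries_eq_map_mk', map_mk, ← mk_inv, ← mk_mul]
      exact mem_map_of_mem _ (hφ a)

end LowerCentralSeries

theorem FreeGroup.inv_mul_map_mem_of_forall_of {α : Type*} {N : Subgroup (FreeGroup α)} [N.Normal]
    (φ : FreeGroup α →* FreeGroup α) (h : ∀ s, (of s)⁻¹ * φ (of s) ∈ N) (a : FreeGroup α) :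
    a⁻¹ * φ a ∈ N := by
  have : QuotientGroup.mk' N = (QuotientGroup.mk' N).comp φ :=
    ext_hom _ _ fun s => QuotientGroup.eq.mpr (h s)
  exact QuotientGroup.eq.mp (DFunLike.congr_fun this a)

section SurfaceWord

open Subgroup

variable {g : ℕ} {α β : Fin g → Fg g} {h : Fg g →* Fg g}

local notation "γ" => Subgroup.lowerCentralSeries (⊤ : Subgroup (Fg g))

theorem map_omegaG (hx : ∀ i, h (X g i) = X g i * α i) (hy : ∀ i, h (Y g i) = Y g i * β i) :
    h (omegaG g) = ((List.finRange g).map fun i => ⁅X g i * α i, Y g i * β i⁆).prod := by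
  simp only [omegaG, map_list_prod, List.map_map, Function.comp_def, map_commutatorElement, hx, hy]

theorem inv_mul_map_mem_lowerCentralSeries_of_generators {k : ℕ}
    (hα : ∀ i, α i ∈ γ k)
    (hβ : ∀ i, β i ∈ γ k)
    (hx : ∀ i, h (X g i) = X g i * α i) (hy : ∀ i, h (Y g i) = Y g i * β i) (a : Fg g) :
    a⁻¹ * h a ∈ γ k := by
  refine FreeGroup.inv_mul_map_mem_of_forall_of h (fun ⟨i, b⟩ => ?_) a
  cases b
  · change (X g i)⁻¹ * h (X g i) ∈ _
    rw [hx, inv_mul_cancel_left]; exact hα i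
  · change (Y g i)⁻¹ * h (Y g i) ∈ _
    rw [hy, inv_mul_cancel_left]; exact hβ i

theorem inv_mul_map_omegaG_mem_lowerCentralSeries {n : ℕ} (hn : 2 ≤ n)
    (hα : ∀ i, α i ∈ γ (n - 1))
    (hβ : ∀ i, β i ∈ γ (n - 1))
    (hx : ∀ i, h (X g i) = X g i * α i) (hy : ∀ i, h (Y g i) = Y g i * β i)
    (hprod : ((List.finRange g).map fun i => ⁅α i, Y g i⁆ * ⁅X g i, β i⁆).prod ∈
      γ (n + 1)) :
    (omegaG g)⁻¹ * h (omegaG g) ∈ γ (n + 1) := by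
  have hay (i : Fin g) : ⁅α i, Y g i⁆ ∈ γ n :=
    Subgroup.lowerCentralSeries_antitone _ (by omega)
      (commutatorElement_mem_lowerCentralSeries (j := 0) (hα i) (mem_top (Y g i)))
  have hxb (i : Fin g) : ⁅X g i, β i⁆ ∈ γ n :=
    Subgroup.lowerCentralSeries_antitone _ (by omega)
      (commutatorElement_mem_lowerCentralSeries (i := 0) (mem_top (X g i)) (hβ i))
  have hab (i : Fin g) : ⁅α i, β i⁆ ∈ γ (n + 1) :=
    Subgroup.lowerCentralSeries_antitone _ (by omega)
      (commutatorElement_mem_lowerCentralSeries (hα i) (hβ i))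
  have := QuotientGroup.mk_list_prod_commutatorElement_mul_mul hay hxb hab (List.finRange g)
  simp only [← map_omegaG hx hy, QuotientGroup.mk'_apply, (QuotientGroup.eq_one_iff _).mpr hprod,
    mul_one] at this
  exact QuotientGroup.eq.mp this.symm

end SurfaceWord

theorem realization_in_A0_general (g n : ℕ) (hn : 2 ≤ n)
    (α β : Fin g → Fg g)
    (hα : ∀ i, α i ∈ (⊤ : Subgroup (Fg g)).lowerCentralSeries (n - 1))
    (hβ : ∀ i, β i ∈ (⊤ : Subgroup (Fg g)).lowerCentralSeries (n - 1))
    (h : Fg g →* Fg g)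
    (hx : ∀ i, h (X g i) = X g i * α i)
    (hy : ∀ i, h (Y g i) = Y g i * β i)
    (hprod : ((List.finRange g).map fun i => ⁅α i, Y g i⁆ * ⁅X g i, β i⁆).prod ∈
      (⊤ : Subgroup (Fg g)).lowerCentralSeries (n + 1)) :
    -- `h(ω_g) ≡ ω_g` modulo `F_{n+2}`
    (omegaG g)⁻¹ * h (omegaG g) ∈ (⊤ : Subgroup (Fg g)).lowerCentralSeries (n + 1) ∧
    -- `h` induces the identity automorphism of `F/F_n`
    (∀ a : Fg g, a⁻¹ * h a ∈ (⊤ : Subgroup (Fg g)).lowerCentralSeries (n - 1)) ∧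
    -- `h` induces an automorphism of `F/F_{n+1}` belonging to `A₀(F/F_{n+1})`
    ∃ ψ : MulAut (Q g (n + 1)),
      (∀ a : Fg g, ψ (mkQ g (n + 1) a) = mkQ g (n + 1) (h a)) ∧
      IsA0 g (n + 1) ψ := by
  have omega_fixed := inv_mul_map_omegaG_mem_lowerCentralSeries hn hα hβ hx hy hprod
  have trivial_mod := inv_mul_map_mem_lowerCentralSeries_of_generators hα hβ hx hy
  have trivial_mod_one (a : Fg g) : a⁻¹ * h a ∈ (⊤ : Subgroup (Fg g)).lowerCentralSeries 1 :=
    Subgroup.lowerCentralSeries_antitone _ (by omega) (trivial_mod a)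
  let ψ : MulAut (Q g (n + 1)) :=
    MulEquiv.ofBijective _ (QuotientGroup.bijective_map_lowerCentralSeries h trivial_mod_one n)
  exact ⟨omega_fixed, trivial_mod, ψ, fun a => rfl, h, fun a => rfl, omega_fixed⟩

/-- if `α_i, β_i ∈ F_n` with `∏_i [α_i,y_i]·[x_i,β_i] ∈ F_{n+2}`, then the
endomorphism `h` with `h(x_i) = x_i·α_i`, `h(y_i) = y_i·β_i` satisfies
`h(ω_g) ≡ ω_g mod F_{n+2}`, induces the identity on `F/F_n`, and induces an
automorphism of `F/F_{n+1}` lying in `A₀(F/F_{n+1})`. -/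
theorem realization_in_A0 (g n : ℕ) (hg : 1 ≤ g) (hn : 2 ≤ n)
    (α β : Fin g → Fg g)
    (hα : ∀ i, α i ∈ (⊤ : Subgroup (Fg g)).lowerCentralSeries (n - 1))
    (hβ : ∀ i, β i ∈ (⊤ : Subgroup (Fg g)).lowerCentralSeries (n - 1))
    (h : Fg g →* Fg g)
    (hx : ∀ i, h (X g i) = X g i * α i)
    (hy : ∀ i, h (Y g i) = Y g i * β i)
    (hprod : ((List.finRange g).map fun i => ⁅α i, Y g i⁆ * ⁅X g i, β i⁆).prod ∈
      (⊤ : Subgroup (Fg g)).lowerCentralSeries (n + 1)) :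
    -- `h(ω_g) ≡ ω_g` modulo `F_{n+2}`
    (omegaG g)⁻¹ * h (omegaG g) ∈ (⊤ : Subgroup (Fg g)).lowerCentralSeries (n + 1) ∧
    -- `h` induces the identity automorphism of `F/F_n`
    (∀ a : Fg g, a⁻¹ * h a ∈ (⊤ : Subgroup (Fg g)).lowerCentralSeries (n - 1)) ∧
    -- `h` induces an automorphism of `F/F_{n+1}` belonging to `A₀(F/F_{n+1})`
    ∃ ψ : MulAut (Q g (n + 1)),
      (∀ a : Fg g, ψ (mkQ g (n + 1) a) = mkQ g (n + 1) (h a)) ∧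
      IsA0 g (n + 1) ψ :=
  realization_in_A0_general g n hn α β hα hβ h hx hy hprod
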